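/- Let V : ℝ² → ℝ be continuously differentiable with inf_{x∈ℝ²} V(x) > 0, and let V_∞ ∈ ℝ be such that V(x) ≤ V_∞ for all x ∈ ℝ² and V(y) → V_∞ as ‖y‖ → ∞. Suppose that for every x ∈ ℝ² the function t ↦ V(tx) − ½⟨∇V(tx), tx⟩ is nondecreasing on (0, ∞), and that V(x) + ½⟨∇V(x), x⟩ ≤ V_∞ for all x ∈ ℝ². Then ⟨∇V(x), x⟩ → 0 as ‖x‖ → ∞, and inf_{ℝ²} V ≤ V(x) − ½⟨∇V(x), x⟩ ≤ V_∞ for all x ∈ ℝ². -/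

import Mathlib

/-!
Write `W y = V y - ½⟪∇V y, y⟫`. Along a ray, `t * d/dt V(t • x) = 2 (V(t • x) - W(t • x))`, and
`W(t • x) ≥ W x` for `t ≥ 1`, so `t * d/dt V(t • x) ≤ 2 (V_inf - W x)`. If `W x > V_inf`, then
`V(t • x)` decreases at least like `-log t`, which is impossible since `V`, being continuous with
a limit at infinity, is bounded below. Letting `t → 0⁺` instead gives `V 0 ≤ W x`. Finally
`V x + ½⟪∇V x, x⟫ ≤ V_inf` and `W ≤ V_inf` give `|⟪∇V x, x⟫| ≤ 2 (V_inf - V x) → 0`.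
-/

open Filter
open scoped InnerProductSpace

abbrev E2 := EuclideanSpace ℝ (Fin 2)

open Set Real Topology

lemma bddBelow_range_of_tendsto_cocompact {X : Type*} [TopologicalSpace X] {f : X → ℝ} {c : ℝ}
    (hf : Continuous f) (hlim : Tendsto f (cocompact X) (𝓝 c)) : BddBelow (range f) :=
  (hf.isBounded_range_iff_isBigO.2 (hlim.isBigO_one ℝ)).bddBelow

lemma le_sub_mul_log_of_mul_deriv_le {g g' : ℝ → ℝ} {c : ℝ}
    (hg : ∀ t, 1 ≤ t → HasDerivAt g (g' t) t) (hle : ∀ t, 1 ≤ t → t * g' t ≤ -c)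
    {t : ℝ} (ht : 1 ≤ t) : g t ≤ g 1 - c * log t := by
  have hanti : AntitoneOn (fun s => g s + c * log s) (Ici 1) := by
    refine antitoneOn_of_hasDerivWithinAt_nonpos (f' := fun s => g' s + c * s⁻¹) (convex_Ici 1)
      (fun s (hs : 1 ≤ s) => ?_) (fun s hs => ?_) (fun s hs => ?_)
    · exact ((hg s hs).continuousAt.add (continuousAt_const.mul
        (continuousAt_log (zero_lt_one.trans_le hs).ne'))).continuousWithinAt
    all_goals
      rw [interior_Ici, mem_Ioi] at hs
      have hs0 : 0 < s := zero_lt_one.trans hs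
    · exact ((hg s hs.le).add ((hasDerivAt_log hs0.ne').const_mul c)).hasDerivWithinAt
    · have : s * (g' s + c * s⁻¹) ≤ 0 := by
        rw [mul_add, mul_left_comm, mul_inv_cancel₀ hs0.ne']
        linarith [hle s hs.le]
      exact nonpos_of_mul_nonpos_right this hs0
  have := hanti self_mem_Ici ht ht
  simp only [log_one, mul_zero, add_zero] at this
  linarith

lemma not_bddBelow_of_mul_deriv_le_neg {g g' : ℝ → ℝ} {c : ℝ} (hc : 0 < c)
    (hg : ∀ t, 1 ≤ t → HasDerivAt g (g' t) t) (hle : ∀ t, 1 ≤ t → t * g' t ≤ -c) :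
    ¬ BddBelow (range g) := by
  rintro ⟨m, hm⟩
  obtain ⟨t, ht, hlog⟩ := ((eventually_ge_atTop 1).and
    ((tendsto_log_atTop.const_mul_atTop hc).eventually_gt_atTop (g 1 - m))).exists
  linarith [hm (mem_range_self t), le_sub_mul_log_of_mul_deriv_le hg hle ht]

variable {F : Type*} [NormedAddCommGroup F] [InnerProductSpace ℝ F] [CompleteSpace F]

lemma continuous_gradient {f : F → ℝ} (hf : ContDiff ℝ 1 f) : Continuous (gradient f) :=
  (InnerProductSpace.toDual ℝ F).symm.continuous.comp (hf.continuous_fderiv one_ne_zero)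

lemma hasDerivAt_comp_smul_const {f : F → ℝ} (hf : Differentiable ℝ f) (x : F) (t : ℝ) :
    HasDerivAt (fun s : ℝ => f (s • x)) ⟪gradient f (t • x), x⟫_ℝ t := by
  simpa [Function.comp_def] using
    (hasGradientAt_iff_hasFDerivAt.1 (hf (t • x)).hasGradientAt).comp_hasDerivAt t
      ((hasDerivAt_id t).smul_const x)

lemma sub_half_inner_gradient_le {V : F → ℝ} {V_inf : ℝ} (hV : Differentiable ℝ V)
    (hbdd : BddBelow (range V)) (hVle : ∀ x, V x ≤ V_inf)
    (hmono : ∀ x : F, MonotoneOn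
      (fun t : ℝ => V (t • x) - (1 / 2) * ⟪gradient V (t • x), t • x⟫_ℝ) (Ioi 0))
    (x : F) : V x - (1 / 2) * ⟪gradient V x, x⟫_ℝ ≤ V_inf := by
  by_contra! hgt
  refine not_bddBelow_of_mul_deriv_le_neg (sub_pos.2 hgt) (fun t _ => hasDerivAt_comp_smul_const hV x t)
    (fun t ht => ?_) (hbdd.mono (range_comp_subset_range (· • x) V))
  have hW := hmono x (mem_Ioi.2 one_pos) (mem_Ioi.2 (one_pos.trans_le ht)) ht
  simp only [one_smul, real_inner_smul_right] at hW
  linarith [hVle (t • x)]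

lemma le_sub_half_inner_gradient {V : F → ℝ} (hV : ContDiff ℝ 1 V)
    (hmono : ∀ x : F, MonotoneOn
      (fun t : ℝ => V (t • x) - (1 / 2) * ⟪gradient V (t • x), t • x⟫_ℝ) (Ioi 0))
    (x : F) : V 0 ≤ V x - (1 / 2) * ⟪gradient V x, x⟫_ℝ := by
  have hcont : Continuous
      (fun t : ℝ => V (t • x) - (1 / 2) * ⟪gradient V (t • x), t • x⟫_ℝ) := by
    have hray : Continuous fun t : ℝ => t • x := continuous_id.smul continuous_const
    exact (hV.continuous.comp hray).sub
      (continuous_const.mul (((continuous_gradient hV).comp hray).inner hray))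
  have := (hmono x).insert_of_continuousWithinAt (nhdsGT_neBot 0) hcont.continuousWithinAt
    (mem_insert 0 _) (mem_insert_of_mem 0 (mem_Ioi.2 one_pos)) zero_le_one
  simpa using this

theorem stmt14 (V : E2 → ℝ) (hV : ContDiff ℝ 1 V)
    (V_inf : ℝ) (hVle : ∀ x, V x ≤ V_inf)
    (hVlim : Tendsto V (cocompact E2) (nhds V_inf))
    (hmono : ∀ x : E2, MonotoneOn
      (fun t : ℝ => V (t • x) - (1 / 2) * ⟪gradient V (t • x), t • x⟫_ℝ)
      (Set.Ioi 0))
    (hV3 : ∀ x, V x + (1 / 2) * ⟪gradient V x, x⟫_ℝ ≤ V_inf) :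
    Tendsto (fun x : E2 => ⟪gradient V x, x⟫_ℝ) (cocompact E2) (nhds 0) ∧
      ∀ x : E2, (⨅ y : E2, V y) ≤ V x - (1 / 2) * ⟪gradient V x, x⟫_ℝ ∧
        V x - (1 / 2) * ⟪gradient V x, x⟫_ℝ ≤ V_inf := by
  have hbdd := bddBelow_range_of_tendsto_cocompact hV.continuous hVlim
  have hupper := sub_half_inner_gradient_le (hV.differentiable one_ne_zero) hbdd hVle hmono
  refine ⟨?_, fun x => ⟨(ciInf_le hbdd 0).trans (le_sub_half_inner_gradient hV hmono x),
    hupper x⟩⟩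
  have hgap : Tendsto (fun x => 2 * (V_inf - V x)) (cocompact E2) (𝓝 0) := by
    simpa using ((tendsto_const_nhds (x := V_inf)).sub hVlim).const_mul 2
  refine squeeze_zero_norm (fun x => ?_) hgap
  rw [Real.norm_eq_abs, abs_le]
  constructor <;> linarith [hV3 x, hupper x]
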